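/- Let $A \colon E_1 \times \cdots \times E_n \to F$ be a continuous $n$-linear map between Banach spaces that is multiple $(r;r)$-summing for some $1 \le r < \infty$. Suppose that for each $k$, every sequence $(x_j^{(k)})_j \in \ell_1^w(E_k)$ can be factored as $x_j^{(k)} = a_j^{(k)} y_j^{(k)}$ with $(a_j^{(k)})_j \in \ell_{r'}$ (where $1/r + 1/r' = 1$) and $(y_j^{(k)})_j \in \ell_r^w(E_k)$. Then $A$ is multiple $(1;1)$-summing. -/

import Mathlib

/-
The qualitative factorization hypothesis self-improves to a quantitative one: there is
`D` such that every finite family `x` factors as `x = a • y` with `‖a‖_{r'} ≤ D ‖x‖_{w,1}` and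
`‖y‖_{w,r} ≤ 1`. Otherwise pick normalized blocks that only factor at cost `> 4ᴺ`, glue them with
weights `2⁻ᴺ` into one weakly `1`-summable sequence and factor it; by uniform boundedness the weak
`r`-norms of all finite subfamilies of the resulting `y` are bounded, so the `N`-th block factors
at cost `O(2ᴺ)`, a contradiction. With such factorizations of the `n` families,
`‖A (x_j)‖ = (∏ₖ |a_{j_k}|) ‖A (y_j)‖`, and Hölder's inequality with exponents `r'`, `r` bounds
`∑ⱼ ‖A (x_j)‖` by `∏ₖ ‖a⁽ᵏ⁾‖_{r'} · C ≤ C ∏ₖ Dₖ ‖x⁽ᵏ⁾‖_{w,1}`.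
-/

open scoped BigOperators

/-- The weak `p`-norm of a finite family of vectors. -/
noncomputable def weakNorm {E : Type*} [NormedAddCommGroup E] [NormedSpace ℝ E]
    (p : ℝ) {m : ℕ} (x : Fin m → E) : ℝ :=
  sSup {r | ∃ φ : E →L[ℝ] ℝ, ‖φ‖ ≤ 1 ∧ r = (∑ j, |φ (x j)| ^ p) ^ (1 / p)}

/-- Membership in `ℓ_p^w(E)` for a sequence. -/
def MemWeakLp {E : Type*} [NormedAddCommGroup E] [NormedSpace ℝ E]
    (p : ℝ) (x : ℕ → E) : Prop :=
  ∀ φ : E →L[ℝ] ℝ, ‖φ‖ ≤ 1 → Summable (fun j => |φ (x j)| ^ p)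

/-- The weak `p`-norm of a sequence. -/
noncomputable def weakSeqNorm {E : Type*} [NormedAddCommGroup E] [NormedSpace ℝ E]
    (p : ℝ) (x : ℕ → E) : ℝ :=
  sSup {r | ∃ φ : E →L[ℝ] ℝ, ‖φ‖ ≤ 1 ∧ r = (∑' j, |φ (x j)| ^ p) ^ (1 / p)}

/-- `A` is multiple `(q;p)`-summing with constant `C`. -/
def IsMultipleSumming {n : ℕ} {E : Fin n → Type*} [∀ i, NormedAddCommGroup (E i)]
    [∀ i, NormedSpace ℝ (E i)] {F : Type*} [NormedAddCommGroup F] [NormedSpace ℝ F]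
    (q p : ℝ) (A : ContinuousMultilinearMap ℝ E F) (C : ℝ) : Prop :=
  ∀ (m : ℕ) (x : ∀ i, Fin m → E i),
    (∑ j : Fin n → Fin m, ‖A (fun i => x i (j i))‖ ^ q) ^ (1 / q) ≤
      C * ∏ i, weakNorm p (x i)

section WeakNorm

variable {E : Type*} [NormedAddCommGroup E] [NormedSpace ℝ E] {p : ℝ} {m : ℕ}

lemma sum_abs_mul_rpow_rpow_one_div {ι : Type*} (s : Finset ι) {c : ℝ} (hc : 0 ≤ c) (hp : p ≠ 0)
    (a : ι → ℝ) :
    (∑ j ∈ s, |c * a j| ^ p) ^ (1 / p) = c * (∑ j ∈ s, |a j| ^ p) ^ (1 / p) := by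
  simp_rw [abs_mul, abs_of_nonneg hc, Real.mul_rpow hc (abs_nonneg _), ← Finset.mul_sum]
  rw [Real.mul_rpow (by positivity) (by positivity), ← Real.rpow_mul hc, mul_one_div_cancel hp,
    Real.rpow_one]

lemma weakNorm_set_bddAbove (hp : 0 < p) (x : Fin m → E) :
    BddAbove {r | ∃ φ : E →L[ℝ] ℝ, ‖φ‖ ≤ 1 ∧ r = (∑ j, |φ (x j)| ^ p) ^ (1 / p)} := by
  refine ⟨(∑ j, ‖x j‖ ^ p) ^ (1 / p), ?_⟩
  rintro _ ⟨φ, hφ, rfl⟩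
  gcongr with j
  exact (φ.le_opNorm _).trans (mul_le_of_le_one_left (norm_nonneg _) hφ)

lemma le_weakNorm (hp : 0 < p) (x : Fin m → E) {φ : E →L[ℝ] ℝ} (hφ : ‖φ‖ ≤ 1) :
    (∑ j, |φ (x j)| ^ p) ^ (1 / p) ≤ weakNorm p x :=
  le_csSup (weakNorm_set_bddAbove hp x) ⟨φ, hφ, rfl⟩

lemma weakNorm_le (x : Fin m → E) {b : ℝ}
    (hb : ∀ φ : E →L[ℝ] ℝ, ‖φ‖ ≤ 1 → (∑ j, |φ (x j)| ^ p) ^ (1 / p) ≤ b) :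
    weakNorm p x ≤ b :=
  csSup_le ⟨_, 0, by simp, rfl⟩ fun _ ⟨φ, hφ, hr⟩ => hr ▸ hb φ hφ

lemma weakNorm_nonneg (hp : 0 < p) (x : Fin m → E) : 0 ≤ weakNorm p x := by
  simpa [Real.zero_rpow hp.ne', Real.zero_rpow (inv_ne_zero hp.ne')] using
    le_weakNorm hp x (φ := 0) (by simp)

lemma sum_abs_le_weakNorm_one (x : Fin m → E) {φ : E →L[ℝ] ℝ} (hφ : ‖φ‖ ≤ 1) :
    ∑ j, |φ (x j)| ≤ weakNorm 1 x := by
  simpa using le_weakNorm one_pos x hφ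

lemma norm_le_weakNorm (hp : 0 < p) (x : Fin m → E) (j : Fin m) : ‖x j‖ ≤ weakNorm p x := by
  obtain ⟨φ, hφ, hφx⟩ := exists_dual_vector'' ℝ (x j)
  calc ‖x j‖ = (|φ (x j)| ^ p) ^ (1 / p) := by
        rw [hφx, RCLike.ofReal_real_eq_id, id, abs_norm, ← Real.rpow_mul (norm_nonneg _),
          mul_one_div_cancel hp.ne', Real.rpow_one]
    _ ≤ (∑ k, |φ (x k)| ^ p) ^ (1 / p) := by
        gcongr
        exact Finset.single_le_sum (f := fun k => |φ (x k)| ^ p) (fun k _ => by positivity)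
          (Finset.mem_univ j)
    _ ≤ weakNorm p x := le_weakNorm hp x hφ

lemma weakNorm_smul_le (hp : 0 < p) {c : ℝ} (hc : 0 ≤ c) (x : Fin m → E) :
    weakNorm p (c • x) ≤ c * weakNorm p x :=
  weakNorm_le _ fun φ hφ => by
    simp only [Pi.smul_apply, map_smul, smul_eq_mul]
    rw [sum_abs_mul_rpow_rpow_one_div _ hc hp.ne']
    exact mul_le_mul_of_nonneg_left (le_weakNorm hp x hφ) hc

end WeakNorm

namespace MemWeakLp

variable {E : Type*} [NormedAddCommGroup E] [NormedSpace ℝ E] {p : ℝ} {y : ℕ → E}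

lemma summable (hy : MemWeakLp p y) (φ : E →L[ℝ] ℝ) : Summable fun j => |φ (y j)| ^ p := by
  set c := ‖φ‖ + 1
  have hc : 0 < c := by positivity
  have hψ : ‖c⁻¹ • φ‖ ≤ 1 := by
    rw [norm_smul, norm_inv, Real.norm_of_nonneg hc.le, inv_mul_le_one₀ hc]
    exact le_add_of_nonneg_right zero_le_one
  have hφ : ∀ j, |φ (y j)| ^ p = c ^ p * |(c⁻¹ • φ) (y j)| ^ p := fun j => by
    rw [← Real.mul_rpow hc.le (abs_nonneg _), ← abs_of_pos hc, ← abs_mul, abs_of_pos hc,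
      FunLike.coe_smul, Pi.smul_apply, smul_eq_mul, mul_inv_cancel_left₀ hc.ne']
  simpa only [hφ] using (hy _ hψ).mul_left (c ^ p)

/-- Uniform boundedness for the operators `T g : φ ↦ (φ (y (g k)))ₖ` from the dual of `E` to
`ℓ_p^m`. As their codomains vary with `m`, it is applied to the functionals `ψ ∘ T g`, `‖ψ‖ ≤ 1`,
and `‖T g φ‖` is recovered by Hahn–Banach. -/
lemma exists_weakNorm_comp_le (hp : 1 ≤ p) (hy : MemWeakLp p y) :
    ∃ β, ∀ (m : ℕ) (g : Fin m → ℕ), Function.Injective g → weakNorm p (y ∘ g) ≤ β := by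
  have : Fact (1 ≤ ENNReal.ofReal p) := ⟨by simpa using ENNReal.ofReal_le_ofReal hp⟩
  let T (m : ℕ) (g : Fin m → ℕ) :
      StrongDual ℝ E →L[ℝ] PiLp (ENNReal.ofReal p) (fun _ : Fin m => ℝ) :=
    (PiLp.continuousLinearEquiv _ ℝ _).symm.toContinuousLinearMap.comp
      (ContinuousLinearMap.pi fun k => NormedSpace.inclusionInDoubleDual ℝ E (y (g k)))
  have hT (m : ℕ) (g : Fin m → ℕ) (φ : E →L[ℝ] ℝ) :
      ‖T m g φ‖ = (∑ k, |φ (y (g k))| ^ p) ^ (1 / p) := by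
    rw [PiLp.norm_eq_sum (ENNReal.toReal_pos (by simp; linarith) ENNReal.ofReal_ne_top),
      ENNReal.toReal_ofReal (by linarith)]
    rfl
  let ι := Σ m, {g : Fin m → ℕ // Function.Injective g} ×
    {ψ : StrongDual ℝ (PiLp (ENNReal.ofReal p) (fun _ : Fin m => ℝ)) // ‖ψ‖ ≤ 1}
  obtain ⟨β, hβ⟩ := banach_steinhaus (g := fun i : ι => i.2.2.1.comp (T i.1 i.2.1.1)) fun φ =>
    ⟨(∑' j, |φ (y j)| ^ p) ^ (1 / p), fun ⟨m, ⟨g, hg⟩, ⟨ψ, hψ⟩⟩ => by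
      refine (ψ.le_opNorm _).trans ((mul_le_of_le_one_left (norm_nonneg _) hψ).trans ?_)
      refine (hT m g φ).trans_le ?_
      gcongr
      simpa [tsum_fintype] using
        tsum_comp_le_tsum_of_inj (hy.summable φ) (fun _ => by positivity) hg⟩
  refine ⟨β, fun m g hg => weakNorm_le _ fun φ hφ => ?_⟩
  obtain ⟨ψ, hψ, hψT⟩ := exists_dual_vector'' ℝ (T m g φ)
  calc (∑ k, |φ ((y ∘ g) k)| ^ p) ^ (1 / p) = ψ (T m g φ) := (hT m g φ).symm.trans hψT.symm
    _ ≤ ‖ψ.comp (T m g) φ‖ := le_abs_self _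
    _ ≤ ‖ψ.comp (T m g)‖ * ‖φ‖ := ContinuousLinearMap.le_opNorm _ φ
    _ ≤ β := (mul_le_of_le_one_right (norm_nonneg _) hφ).trans (hβ ⟨m, ⟨g, hg⟩, ⟨ψ, hψ⟩⟩)

end MemWeakLp

section Factorization

variable {E : Type*} [NormedAddCommGroup E] [NormedSpace ℝ E] {r r' : ℝ}

def HasFactorization (r r' D : ℝ) {m : ℕ} (x : Fin m → E) : Prop :=
  ∃ (a : Fin m → ℝ) (y : Fin m → E), (∀ j, x j = a j • y j) ∧
    (∑ j, |a j| ^ r') ^ (1 / r') ≤ D ∧ weakNorm r y ≤ 1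

namespace HasFactorization

variable {m : ℕ} {D D' : ℝ} {x : Fin m → E}

lemma mono (h : HasFactorization r r' D x) (hD : D ≤ D') : HasFactorization r r' D' x :=
  let ⟨a, y, hx, ha, hy⟩ := h
  ⟨a, y, hx, ha.trans hD, hy⟩

lemma smul (h : HasFactorization r r' D x) (hr' : r' ≠ 0) {c : ℝ} (hc : 0 ≤ c) :
    HasFactorization r r' (c * D) (c • x) := by
  obtain ⟨a, y, hx, ha, hy⟩ := h
  refine ⟨c • a, y, fun j => by simp [hx j, smul_smul], ?_, hy⟩
  simpa only [Pi.smul_apply, smul_eq_mul, sum_abs_mul_rpow_rpow_one_div _ hc hr'] using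
    mul_le_mul_of_nonneg_left ha hc

lemma zero (hr : r ≠ 0) (hr' : r' ≠ 0) (hD : 0 ≤ D) :
    HasFactorization r r' D (0 : Fin m → E) := by
  refine ⟨0, 0, fun j => by simp,
    by simpa [Real.zero_rpow hr', Real.zero_rpow (inv_ne_zero hr')], ?_⟩
  exact weakNorm_le _ fun φ _ => by simp [Real.zero_rpow hr, Real.zero_rpow (inv_ne_zero hr)]

end HasFactorization

noncomputable def glue {m : ℕ → ℕ} (x : ∀ N, Fin (m N) → E) : ℕ → E :=
  Function.extend (Encodable.encode : (Σ N, Fin (m N)) → ℕ)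
    (fun s => (2⁻¹ : ℝ) ^ s.1 • x s.1 s.2) 0

variable {m : ℕ → ℕ} {x : ∀ N, Fin (m N) → E}

lemma glue_encode (N : ℕ) (k : Fin (m N)) :
    glue x (Encodable.encode (⟨N, k⟩ : Σ N, Fin (m N))) = (2⁻¹ : ℝ) ^ N • x N k :=
  Encodable.encode_injective.extend_apply _ _ _

lemma memWeakLp_one_glue (hx : ∀ N, weakNorm 1 (x N) ≤ 1) : MemWeakLp 1 (glue x) := by
  intro φ hφ
  simp only [Real.rpow_one]
  refine ((Encodable.encode_injective (α := Σ N, Fin (m N))).summable_iff fun j hj => ?_).mp ?_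
  · rw [glue, Function.extend_apply' _ _ _ hj]
    simp
  have hblock (s : Σ N, Fin (m N)) :
      |φ (glue x (Encodable.encode s))| = (2⁻¹ : ℝ) ^ s.1 * |φ (x s.1 s.2)| := by
    rw [glue_encode, map_smul, smul_eq_mul, abs_mul, abs_of_nonneg (by positivity)]
  simp only [Function.comp_def, hblock]
  refine (summable_sigma_of_nonneg fun _ => by positivity).mpr
    ⟨fun _ => (hasSum_fintype _).summable, ?_⟩
  refine summable_geometric_two.of_nonneg_of_le (fun _ => by positivity) fun N => ?_
  dsimp only
  rw [tsum_fintype, ← Finset.mul_sum, one_div]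
  exact mul_le_of_le_one_right (by positivity) ((sum_abs_le_weakNorm_one _ hφ).trans (hx N))

lemma hasFactorization_comp {z : ℕ → E} {a : ℕ → ℝ} {y : ℕ → E} (hz : ∀ j, z j = a j • y j)
    (ha : Summable fun j => |a j| ^ r') (hr : 0 < r) (hr' : 0 < r') {β : ℝ} (hβ : 1 ≤ β)
    {n : ℕ} {g : Fin n → ℕ} (hg : Function.Injective g) (hy : weakNorm r (y ∘ g) ≤ β) :
    HasFactorization r r' (β * (∑' j, |a j| ^ r') ^ (1 / r')) (z ∘ g) := by
  have hβ0 : 0 < β := zero_lt_one.trans_le hβ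
  refine ⟨fun k => β * a (g k), β⁻¹ • (y ∘ g), fun k => ?_, ?_, ?_⟩
  · rw [Function.comp_apply, hz, Pi.smul_apply, Function.comp_apply, smul_smul, mul_right_comm,
      mul_inv_cancel₀ hβ0.ne', one_mul]
  · rw [sum_abs_mul_rpow_rpow_one_div _ hβ0.le hr'.ne']
    gcongr
    simpa [tsum_fintype] using tsum_comp_le_tsum_of_inj ha (fun _ => by positivity) hg
  · calc weakNorm r (β⁻¹ • (y ∘ g)) ≤ β⁻¹ * weakNorm r (y ∘ g) :=
          weakNorm_smul_le hr (by positivity) _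
      _ ≤ β⁻¹ * β := by gcongr
      _ = 1 := inv_mul_cancel₀ hβ0.ne'

lemma exists_forall_hasFactorization_two_pow_mul (hr : 1 ≤ r) (hr' : 0 < r')
    (hf : ∀ z : ℕ → E, MemWeakLp 1 z → ∃ (a : ℕ → ℝ) (y : ℕ → E),
      (∀ j, z j = a j • y j) ∧ Summable (fun j => |a j| ^ r') ∧ MemWeakLp r y)
    (hx : ∀ N, weakNorm 1 (x N) ≤ 1) :
    ∃ K, ∀ N, HasFactorization r r' (2 ^ N * K) (x N) := by
  obtain ⟨a, y, hz, ha, hy⟩ := hf _ (memWeakLp_one_glue hx)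
  obtain ⟨β, hβ⟩ := hy.exists_weakNorm_comp_le hr
  refine ⟨max β 1 * (∑' j, |a j| ^ r') ^ (1 / r'), fun N => ?_⟩
  let g : Fin (m N) → ℕ := fun k => Encodable.encode (⟨N, k⟩ : Σ N, Fin (m N))
  have hg : Function.Injective g := fun k l h => by
    simpa using Encodable.encode_injective h
  have hxN : x N = (2 : ℝ) ^ N • (glue x ∘ g) := funext fun k => by
    rw [Pi.smul_apply, Function.comp_apply, glue_encode, smul_smul, ← mul_pow,
      mul_inv_cancel₀ two_ne_zero, one_pow, one_smul]
  rw [hxN]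
  exact (hasFactorization_comp hz ha (by linarith) hr' (le_max_right _ _) hg
    ((hβ _ g hg).trans (le_max_left _ _))).smul hr'.ne' (by positivity)

lemma exists_forall_hasFactorization (hr : 1 ≤ r) (hr' : 0 < r')
    (hf : ∀ z : ℕ → E, MemWeakLp 1 z → ∃ (a : ℕ → ℝ) (y : ℕ → E),
      (∀ j, z j = a j • y j) ∧ Summable (fun j => |a j| ^ r') ∧ MemWeakLp r y) :
    ∃ D ≥ 0, ∀ (n : ℕ) (x : Fin n → E), HasFactorization r r' (D * weakNorm 1 x) x := by
  by_contra! hcon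
  choose m x hx using fun N : ℕ => hcon (4 ^ N) (by positivity)
  have ht : ∀ N, 0 < weakNorm 1 (x N) := fun N =>
    (weakNorm_nonneg one_pos _).lt_of_ne' fun h0 => hx N <| by
      have hx0 : x N = 0 := funext fun k => norm_le_zero_iff.mp (h0 ▸ norm_le_weakNorm one_pos _ k)
      rw [h0, mul_zero, hx0]
      exact HasFactorization.zero (by linarith) hr'.ne' le_rfl
  obtain ⟨K, hK⟩ := exists_forall_hasFactorization_two_pow_mul hr hr' hf
    (x := fun N => (weakNorm 1 (x N))⁻¹ • x N) fun N =>
      (weakNorm_smul_le one_pos (inv_pos.mpr (ht N)).le _).trans (inv_mul_cancel₀ (ht N).ne').le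
  obtain ⟨N, hN⟩ := pow_unbounded_of_one_lt K one_lt_two
  have hxN := (hK N).smul hr'.ne' (ht N).le
  rw [smul_inv_smul₀ (ht N).ne'] at hxN
  refine hx N (hxN.mono ?_)
  calc weakNorm 1 (x N) * (2 ^ N * K) ≤ weakNorm 1 (x N) * (2 ^ N * 2 ^ N) := by
        gcongr
        exact (ht N).le
    _ = 4 ^ N * weakNorm 1 (x N) := by rw [← mul_pow]; norm_num; ring

end Factorization

lemma sum_prod_abs_rpow_rpow_one_div {n m : ℕ} (a : Fin n → Fin m → ℝ) (p : ℝ) :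
    (∑ j : Fin n → Fin m, |∏ i, a i (j i)| ^ p) ^ (1 / p) =
      ∏ i, (∑ k, |a i k| ^ p) ^ (1 / p) := by
  simp_rw [Finset.abs_prod, ← Real.finsetProd_rpow _ _ fun _ _ => abs_nonneg _]
  rw [← Fintype.prod_sum (fun i k => |a i k| ^ p),
    Real.finsetProd_rpow _ _ fun _ _ => Finset.sum_nonneg fun _ _ => by positivity]

section Multilinear

variable {n : ℕ} {E : Fin n → Type*} [∀ i, NormedAddCommGroup (E i)] [∀ i, NormedSpace ℝ (E i)]
  {F : Type*} [NormedAddCommGroup F] [NormedSpace ℝ F]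

lemma IsMultipleSumming.one_one_of_hasFactorization {r r' C : ℝ} {D : Fin n → ℝ}
    (hrr' : r'.HolderConjugate r) {A : ContinuousMultilinearMap ℝ E F}
    (hA : IsMultipleSumming r r A C) (hC : 0 ≤ C)
    (hD : ∀ i (m : ℕ) (x : Fin m → E i), HasFactorization r r' (D i * weakNorm 1 x) x) :
    IsMultipleSumming 1 1 A (C * ∏ i, D i) := by
  intro m x
  choose a y hxy ha hy using fun i => hD i m (x i)
  have hAx (j : Fin n → Fin m) :
      ‖A (fun i => x i (j i))‖ = |∏ i, a i (j i)| * ‖A (fun i => y i (j i))‖ := by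
    simp only [hxy, A.map_smul_univ, norm_smul, Real.norm_eq_abs]
  have hAy : (∑ j : Fin n → Fin m, ‖A (fun i => y i (j i))‖ ^ r) ^ (1 / r) ≤ C :=
    (hA m y).trans <| mul_le_of_le_one_right hC <|
      Finset.prod_le_one (fun i _ => weakNorm_nonneg hrr'.symm.pos _) fun i _ => hy i
  have ha' : ∏ i, (∑ k, |a i k| ^ r') ^ (1 / r') ≤ ∏ i, (D i * weakNorm 1 (x i)) :=
    Finset.prod_le_prod (fun _ _ => by positivity) fun i _ => ha i
  simp only [Real.rpow_one, div_one, hAx]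
  calc ∑ j : Fin n → Fin m, |∏ i, a i (j i)| * ‖A (fun i => y i (j i))‖
      ≤ (∑ j : Fin n → Fin m, |∏ i, a i (j i)| ^ r') ^ (1 / r') *
          (∑ j : Fin n → Fin m, ‖A (fun i => y i (j i))‖ ^ r) ^ (1 / r) :=
        Real.inner_le_Lp_mul_Lq_of_nonneg _ hrr' (fun _ _ => abs_nonneg _)
          fun _ _ => norm_nonneg _
    _ ≤ (∏ i, (D i * weakNorm 1 (x i))) * C := by
        rw [sum_prod_abs_rpow_rpow_one_div]
        exact mul_le_mul ha' hAy (by positivity)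
          ((Finset.prod_nonneg fun _ _ => by positivity).trans ha')
    _ = (C * ∏ i, D i) * ∏ i, weakNorm 1 (x i) := by rw [Finset.prod_mul_distrib]; ring

end Multilinear

variable {n : ℕ} {E : Fin n → Type*} [∀ i, NormedAddCommGroup (E i)]
  [∀ i, NormedSpace ℝ (E i)] [∀ i, CompleteSpace (E i)]
  {F : Type*} [NormedAddCommGroup F] [NormedSpace ℝ F] [CompleteSpace F]

theorem multiple_summing_of_factorization (r r' C : ℝ) (hr : 1 ≤ r)
    (hrr' : 1 / r + 1 / r' = 1) (A : ContinuousMultilinearMap ℝ E F) (hC : 0 ≤ C)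
    (hA : IsMultipleSumming r r A C)
    (hfact : ∀ i, ∀ x : ℕ → E i, MemWeakLp 1 x →
      ∃ (a : ℕ → ℝ) (y : ℕ → E i), (∀ j, x j = a j • y j) ∧
        Summable (fun j => |a j| ^ r') ∧ MemWeakLp r y) :
    ∃ C' ≥ (0 : ℝ), IsMultipleSumming 1 1 A C' := by
  rcases hr.eq_or_lt with rfl | hr
  · exact ⟨C, hC, hA⟩
  have hrr' : r.HolderConjugate r' :=
    Real.holderConjugate_iff.mpr ⟨hr, by simpa only [one_div] using hrr'⟩
  choose D hD0 hD using fun i => exists_forall_hasFactorization hr.le hrr'.symm.pos (hfact i)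
  exact ⟨C * ∏ i, D i, mul_nonneg hC (Finset.prod_nonneg fun i _ => hD0 i),
    hA.one_one_of_hasFactorization hrr'.symm hC hD⟩
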